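/- Suppose T ∈ Q has true height α(T) and f is a witness for T. Then the tree T* ⊆ 2^{<α(T)+ω} defined by T* ∩ 2^{<α(T)} = T, T*_{[α(T)]} = lim_{α(T)}(T), and above level α(T) all finite binary extensions of elements of lim_{α(T)}(T), is a condition in Q with α(T*) = α(T)+ω, T ≤_Q T*, and lim_{α(T)}(T*_{[<α(T)]}) \ T*_{[α(T)]} is empty (so η_{α(T)}(T*) is undefined). -/

import Mathlib

open Ordinal Set Cardinal

/-- A transfinite binary sequence: a length and values, zero beyond the length. -/
structure BSeq where
  len : Ordinal.{0}
  val : Ordinal.{0} → Bool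
  val_eq_false : ∀ β, len ≤ β → val β = false

namespace BSeq

/-- The empty sequence. -/
def nil : BSeq := ⟨0, fun _ => false, fun _ _ => rfl⟩

/-- Restriction `η↾β` of a sequence to length `β`. -/
noncomputable def restrict (η : BSeq) (β : Ordinal) : BSeq :=
  ⟨min η.len β, fun γ => if γ < β then η.val γ else false, by
    intro γ hγ
    rcases min_le_iff.mp hγ with h | h
    · by_cases hb : γ < β
      · simpa [hb] using η.val_eq_false γ h
      · simp [hb]
    · simp [not_lt.mpr h]⟩

/-- `ν ⊴ η` : `ν` is an initial segment of `η`. -/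
def IsInitSeg (ν η : BSeq) : Prop :=
  ν.len ≤ η.len ∧ ∀ β < ν.len, ν.val β = η.val β

/-- `ν ◁ η` : `ν` is a proper initial segment of `η`. -/
def IsStrictInitSeg (ν η : BSeq) : Prop :=
  ν.IsInitSeg η ∧ ν.len < η.len

/-- `η⌢⟨b⟩`, appending one bit. -/
noncomputable def snoc (η : BSeq) (b : Bool) : BSeq :=
  ⟨η.len + 1, fun β => if β = η.len then b else η.val β, by
    intro β hβ
    have h1 : η.len < β := by
      exact lt_of_lt_of_le (lt_add_one η.len) hβ
    beta_reduce
    rw [if_neg (ne_of_gt h1)]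
    exact η.val_eq_false β h1.le⟩

end BSeq

/-- The level `T_{[β]} = T ∩ 2^β`. -/
def level (T : Set BSeq) (β : Ordinal) : Set BSeq := {η ∈ T | η.len = β}

/-- `T_{[<β]} = T ∩ 2^{<β}`. -/
def levelLT (T : Set BSeq) (β : Ordinal) : Set BSeq := {η ∈ T | η.len < β}

/-- `lim_δ(T) = {η ∈ 2^δ : ∀ β < δ, η↾β ∈ T}`. -/
def limAt (T : Set BSeq) (δ : Ordinal) : Set BSeq :=
  {η | η.len = δ ∧ ∀ β < δ, η.restrict β ∈ T}

/-- `T ⊆ 2^{<α}` is an `α`-tree. -/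
structure IsTree (α : Ordinal) (T : Set BSeq) : Prop where
  limit : Order.IsSuccLimit α
  len_lt : ∀ η ∈ T, η.len < α
  nil_mem : BSeq.nil ∈ T
  downClosed : ∀ ν η : BSeq, ν.IsStrictInitSeg η → η ∈ T → ν ∈ T
  succ_mem : ∀ η ∈ T, ∀ b : Bool, η.snoc b ∈ T
  ext_mem : ∀ η ∈ T, ∀ β, η.len ≤ β → β < α → ∃ ρ ∈ T, η.IsInitSeg ρ ∧ ρ.len = β

/-- `T` has true height `α`: every node lies on a cofinal branch through `T`. -/
def TrueHeight (α : Ordinal) (T : Set BSeq) : Prop :=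
  ∀ η ∈ T, ∃ ν : BSeq, ν.len = α ∧ η.IsStrictInitSeg ν ∧ ∀ β < α, ν.restrict β ∈ T

/-- A condition of the forcing `Q`: a tree of true height `α` (a limit ordinal)
omitting at most one limit point at each limit level. -/
structure IsCond (α : Ordinal) (T : Set BSeq) : Prop where
  tree : IsTree α T
  trueHeight : TrueHeight α T
  omits_le_one : ∀ δ < α, Order.IsSuccLimit δ → (limAt T δ \ level T δ).Subsingleton

/-- The end-extension order of `Q`. -/
def QLe (α₁ : Ordinal) (T₁ : Set BSeq) (α₂ : Ordinal) (T₂ : Set BSeq) : Prop :=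
  α₁ ≤ α₂ ∧ T₁ = levelLT T₂ α₁

/-- `f` is a witness for `T` (of height `α`). -/
def IsWitness (α : Ordinal) (T : Set BSeq) (f : BSeq → BSeq) : Prop :=
  ∀ η ∈ T, f η ∈ limAt T α ∧ η.IsStrictInitSeg (f η)

/-- The order of `Q^*`. -/
def QsLe (α₁ : Ordinal) (T₁ : Set BSeq) (f₁ : BSeq → BSeq)
    (α₂ : Ordinal) (T₂ : Set BSeq) (f₂ : BSeq → BSeq) : Prop :=
  QLe α₁ T₁ α₂ T₂ ∧ ∀ η ∈ T₁, (f₁ η).IsInitSeg (f₂ η)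

/-- `C` is a club (closed unbounded) subset of `μ`. -/
def IsClubIn (C : Set Ordinal) (μ : Ordinal) : Prop :=
  C ⊆ Set.Iio μ ∧
  (∀ δ < μ, Order.IsSuccLimit δ → (∀ β < δ, ∃ γ ∈ C, β < γ ∧ γ < δ) → δ ∈ C) ∧
  (∀ β < μ, ∃ γ ∈ C, β < γ ∧ γ < μ)

/-- `S` is stationary in `μ`. -/
def IsStationaryIn (S : Set Ordinal) (μ : Ordinal) : Prop :=
  ∀ C, IsClubIn C μ → (S ∩ C).Nonempty

/-- The set of accumulation points of a set of ordinals. -/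
def accPts (C : Set Ordinal) : Set Ordinal :=
  {β | 0 < β ∧ ∀ γ < β, ∃ δ ∈ C, γ < δ ∧ δ < β}

/-- The canonical extension `T^*` of `T` to height `α + ω`: below `α` it is `T`,
at level `α` it is `lim_α(T)`, and above it consists of all finite binary
extensions of elements of `lim_α(T)`. -/
def starExt (α : Ordinal) (T : Set BSeq) : Set BSeq :=
  T ∪ {ρ : BSeq | α ≤ ρ.len ∧ ρ.len < α + Ordinal.omega0 ∧ ρ.restrict α ∈ limAt T α}

/-!
Below level `α` the tree `T*` is `T`, so it inherits the omission condition there; at level `α`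
all of `lim_α(T)` is put in, so nothing is omitted; and `α + ω` has no limit levels above `α`.
For the true height, a node of `T` extends (by the true height of `T`) to a branch in `lim_α(T)`,
and a node of length at least `α` extends by zeros to a cofinal branch of length `α + ω`.
-/

namespace BSeq

theorem ext_of_val_lt {η ν : BSeq} (hlen : η.len = ν.len)
    (hval : ∀ β < η.len, η.val β = ν.val β) : η = ν := by
  obtain ⟨ηl, ηv, hη⟩ := η
  obtain ⟨νl, νv, hν⟩ := ν
  subst hlen
  congr
  funext β
  by_cases hβ : β < ηl
  · exact hval β hβ
  · rw [hη β (not_lt.1 hβ), hν β (not_lt.1 hβ)]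

theorem IsInitSeg.refl (η : BSeq) : η.IsInitSeg η :=
  ⟨le_rfl, fun _ _ => rfl⟩

theorem IsInitSeg.trans {ρ ν η : BSeq} (h₁ : ρ.IsInitSeg ν) (h₂ : ν.IsInitSeg η) :
    ρ.IsInitSeg η :=
  ⟨h₁.1.trans h₂.1, fun β hβ => (h₁.2 β hβ).trans (h₂.2 β (hβ.trans_le h₁.1))⟩

@[simp] theorem restrict_len (η : BSeq) (β : Ordinal) : (η.restrict β).len = min η.len β := rfl

theorem restrict_val_of_lt (η : BSeq) {β γ : Ordinal} (h : γ < β) :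
    (η.restrict β).val γ = η.val γ := if_pos h

theorem restrict_of_len_le {η : BSeq} {β : Ordinal} (h : η.len ≤ β) : η.restrict β = η :=
  ext_of_val_lt (min_eq_left h) fun _ hγ => restrict_val_of_lt η (hγ.trans_le (min_le_right _ _))

theorem restrict_restrict (η : BSeq) {β γ : Ordinal} (h : γ ≤ β) :
    (η.restrict β).restrict γ = η.restrict γ := by
  refine ext_of_val_lt (by simp [min_assoc, min_eq_right h]) fun δ hδ => ?_
  have hδγ : δ < γ := hδ.trans_le (min_le_right _ _)
  rw [restrict_val_of_lt _ hδγ, restrict_val_of_lt _ (hδγ.trans_le h), restrict_val_of_lt _ hδγ]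

theorem restrict_isStrictInitSeg (η : BSeq) {β : Ordinal} (h : β < η.len) :
    (η.restrict β).IsStrictInitSeg η :=
  ⟨⟨min_le_left _ _, fun _ hγ => restrict_val_of_lt η (hγ.trans_le (min_le_right _ _))⟩,
    (min_le_right _ _).trans_lt h⟩

theorem eq_restrict_of_isInitSeg {ν η : BSeq} (h : ν.IsInitSeg η) : ν = η.restrict ν.len :=
  ext_of_val_lt (by simp [min_eq_right h.1]) fun β hβ => by
    rw [restrict_val_of_lt η hβ, h.2 β hβ]

theorem IsInitSeg.restrict {ν η : BSeq} (h : ν.IsInitSeg η) {β : Ordinal} (hβ : ν.len ≤ β) :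
    ν.IsInitSeg (η.restrict β) :=
  ⟨le_min h.1 hβ, fun γ hγ => by rw [restrict_val_of_lt η (hγ.trans_le hβ), h.2 γ hγ]⟩

theorem snoc_restrict (η : BSeq) (b : Bool) {γ : Ordinal} (h : γ ≤ η.len) :
    (η.snoc b).restrict γ = η.restrict γ := by
  refine ext_of_val_lt ((min_eq_right (h.trans le_self_add)).trans (min_eq_right h).symm)
    fun δ hδ => ?_
  have hδγ : δ < γ := hδ.trans_le (min_le_right _ _)
  rw [restrict_val_of_lt _ hδγ, restrict_val_of_lt _ hδγ]
  exact if_neg (hδγ.trans_le h).ne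

noncomputable def pad (σ : BSeq) (β : Ordinal) : BSeq :=
  ⟨max σ.len β, σ.val, fun γ h => σ.val_eq_false γ ((le_max_left _ _).trans h)⟩

@[simp] theorem pad_len (σ : BSeq) (β : Ordinal) : (σ.pad β).len = max σ.len β := rfl

theorem isInitSeg_pad (σ : BSeq) (β : Ordinal) : σ.IsInitSeg (σ.pad β) :=
  ⟨le_max_left _ _, fun _ _ => rfl⟩

theorem pad_restrict_of_le_len (σ : BSeq) (γ : Ordinal) {β : Ordinal} (h : β ≤ σ.len) :
    (σ.pad γ).restrict β = σ.restrict β :=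
  ext_of_val_lt (by simp [min_eq_right h, min_eq_right (h.trans (le_max_left _ γ))])
    fun δ hδ => by
      have hδβ : δ < β := hδ.trans_le (min_le_right _ _)
      rw [restrict_val_of_lt _ hδβ, restrict_val_of_lt _ hδβ]
      rfl

theorem pad_restrict_of_le (σ : BSeq) {β γ : Ordinal} (h : β ≤ γ) :
    (σ.pad γ).restrict β = (σ.pad β).restrict β :=
  ext_of_val_lt (by simp [min_eq_right (h.trans (le_max_right _ _))])
    fun δ hδ => by
      have hδβ : δ < β := hδ.trans_le (min_le_right _ _)
      rw [restrict_val_of_lt _ hδβ, restrict_val_of_lt _ hδβ]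
      rfl

end BSeq

theorem Ordinal.le_of_isSuccLimit_of_lt_add_omega0 {α δ : Ordinal} (hδ : Order.IsSuccLimit δ)
    (h : δ < α + ω) : δ ≤ α := by
  by_contra hαδ
  have hω : ω ≤ δ - α :=
    omega0_le_of_isSuccLimit (isSuccLimit_sub hδ.isSuccPrelimit (not_le.1 hαδ))
  exact h.not_ge ((le_sub_of_le (not_le.1 hαδ).le).1 hω)

theorem TrueHeight.ext_mem {α : Ordinal} {T : Set BSeq} (hT : TrueHeight α T) :
    ∀ η ∈ T, ∀ β, η.len ≤ β → β < α → ∃ ρ ∈ T, η.IsInitSeg ρ ∧ ρ.len = β := by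
  intro η hη β hηβ hβ
  obtain ⟨ν, hνlen, hην, hν⟩ := hT η hη
  exact ⟨ν.restrict β, hν β hβ, hην.1.restrict hηβ, by simp [hνlen, hβ.le]⟩

section starExt

variable {α : Ordinal} {T : Set BSeq}

theorem mem_of_mem_starExt_of_len_lt {ρ : BSeq} (hρ : ρ ∈ starExt α T) (h : ρ.len < α) :
    ρ ∈ T :=
  hρ.resolve_right fun hup => (h.trans_le hup.1).false

theorem len_lt_of_mem_starExt (hT : IsTree α T) {ρ : BSeq} (hρ : ρ ∈ starExt α T) :
    ρ.len < α + ω :=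
  hρ.elim (fun h => (hT.len_lt ρ h).trans_le le_self_add) (·.2.1)

theorem restrict_mem_limAt_of_mem_starExt (hT : IsTree α T) {ρ : BSeq} (hρ : ρ ∈ starExt α T)
    (h : α ≤ ρ.len) :
    ρ.restrict α ∈ limAt T α :=
  (hρ.resolve_left fun hT' => (hT.len_lt ρ hT').not_ge h).2.2

theorem restrict_mem_starExt (hT : IsTree α T) {ρ : BSeq} (hρ : ρ ∈ starExt α T)
    (β : Ordinal) : ρ.restrict β ∈ starExt α T := by
  rcases le_or_gt ρ.len β with hρβ | hβρ
  · rwa [BSeq.restrict_of_len_le hρβ]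
  rcases hρ with hρT | ⟨hαρ, hρω, hρα⟩
  · exact Or.inl (hT.downClosed _ _ (ρ.restrict_isStrictInitSeg hβρ) hρT)
  rcases lt_or_ge β α with hβα | hαβ
  · rw [← ρ.restrict_restrict hβα.le]
    exact Or.inl (hρα.2 β hβα)
  · exact Or.inr ⟨le_min hαρ hαβ, (min_le_left _ _).trans_lt hρω, by
      rwa [ρ.restrict_restrict hαβ]⟩

theorem mem_starExt_of_mem_limAt {ν : BSeq} (h : ν ∈ limAt T α) : ν ∈ starExt α T :=
  Or.inr ⟨h.1.ge, h.1 ▸ lt_add_of_pos_right _ omega0_pos, by rwa [BSeq.restrict_of_len_le h.1.le]⟩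

theorem snoc_mem_starExt (hT : IsTree α T) {η : BSeq} (hη : η ∈ starExt α T) (b : Bool) :
    η.snoc b ∈ starExt α T := by
  rcases hη with hηT | ⟨hαη, hηω, hηα⟩
  · exact Or.inl (hT.succ_mem η hηT b)
  · refine Or.inr ⟨hαη.trans le_self_add, ?_, by rwa [η.snoc_restrict b hαη]⟩
    show η.len + 1 < α + ω
    rw [← Order.succ_eq_add_one]
    exact (isSuccLimit_add α isSuccLimit_omega0).succ_lt hηω

theorem pad_mem_starExt (hT : IsTree α T) {ρ : BSeq} (hρ : ρ ∈ starExt α T) (hαρ : α ≤ ρ.len)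
    {β : Ordinal} (hβ : β < α + ω) : ρ.pad β ∈ starExt α T :=
  Or.inr ⟨hαρ.trans (le_max_left _ _), max_lt (len_lt_of_mem_starExt hT hρ) hβ, by
    rw [ρ.pad_restrict_of_le_len β hαρ]
    exact restrict_mem_limAt_of_mem_starExt hT hρ hαρ⟩

theorem pad_restrict_mem_starExt (hT : IsTree α T) {ρ : BSeq} (hρ : ρ ∈ starExt α T)
    (hαρ : α ≤ ρ.len) {β : Ordinal} (hβ : β < α + ω) :
    (ρ.pad (α + ω)).restrict β ∈ starExt α T := by
  rw [ρ.pad_restrict_of_le hβ.le]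
  exact restrict_mem_starExt hT (pad_mem_starExt hT hρ hαρ hβ) β

theorem exists_isInitSeg_mem_starExt (hH : TrueHeight α T) {η : BSeq} (hη : η ∈ starExt α T) :
    ∃ ρ ∈ starExt α T, α ≤ ρ.len ∧ η.IsInitSeg ρ := by
  rcases lt_or_ge η.len α with hηα | hαη
  · obtain ⟨ν, hνlen, hην, hν⟩ := hH η (mem_of_mem_starExt_of_len_lt hη hηα)
    exact ⟨ν, mem_starExt_of_mem_limAt ⟨hνlen, hν⟩, hνlen.ge, hην.1⟩
  · exact ⟨η, hη, hαη, .refl η⟩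

theorem trueHeight_starExt (hT : IsTree α T) (hH : TrueHeight α T) :
    TrueHeight (α + ω) (starExt α T) := by
  intro η hη
  obtain ⟨ρ, hρ, hαρ, hηρ⟩ := exists_isInitSeg_mem_starExt hH hη
  have hlen : (ρ.pad (α + ω)).len = α + ω := max_eq_right (len_lt_of_mem_starExt hT hρ).le
  refine ⟨ρ.pad (α + ω), hlen, ⟨hηρ.trans (ρ.isInitSeg_pad _), ?_⟩,
    fun β hβ => pad_restrict_mem_starExt hT hρ hαρ hβ⟩
  rw [hlen]
  exact len_lt_of_mem_starExt hT hη

theorem isTree_starExt (hT : IsTree α T) (hH : TrueHeight α T) :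
    IsTree (α + ω) (starExt α T) where
  limit := isSuccLimit_add α isSuccLimit_omega0
  len_lt _ := len_lt_of_mem_starExt hT
  nil_mem := Or.inl hT.nil_mem
  downClosed _ _ hνη hη := BSeq.eq_restrict_of_isInitSeg hνη.1 ▸ restrict_mem_starExt hT hη _
  succ_mem _ := snoc_mem_starExt hT
  ext_mem := (trueHeight_starExt hT hH).ext_mem

theorem levelLT_starExt_self (hT : IsTree α T) : levelLT (starExt α T) α = T :=
  Set.ext fun ρ => ⟨fun h => mem_of_mem_starExt_of_len_lt h.1 h.2,
    fun h => ⟨Or.inl h, hT.len_lt ρ h⟩⟩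

theorem level_starExt_of_lt {δ : Ordinal} (hδ : δ < α) : level (starExt α T) δ = level T δ :=
  Set.ext fun _ => ⟨fun h => ⟨mem_of_mem_starExt_of_len_lt h.1 (h.2 ▸ hδ), h.2⟩,
    fun h => ⟨Or.inl h.1, h.2⟩⟩

theorem level_starExt_self (hT : IsTree α T) : level (starExt α T) α = limAt T α :=
  Set.ext fun _ => ⟨fun h => BSeq.restrict_of_len_le h.2.le ▸
    restrict_mem_limAt_of_mem_starExt hT h.1 h.2.ge, fun h => ⟨mem_starExt_of_mem_limAt h, h.1⟩⟩

theorem limAt_starExt_of_le {δ : Ordinal} (hδ : δ ≤ α) : limAt (starExt α T) δ = limAt T δ := by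
  ext η
  refine and_congr_right fun hlen => forall₂_congr fun β hβ => ⟨fun h => ?_, Or.inl⟩
  refine mem_of_mem_starExt_of_len_lt h ?_
  rw [BSeq.restrict_len, hlen, min_eq_right hβ.le]
  exact hβ.trans_le hδ

theorem isCond_starExt (hT : IsCond α T) : IsCond (α + ω) (starExt α T) where
  tree := isTree_starExt hT.tree hT.trueHeight
  trueHeight := trueHeight_starExt hT.tree hT.trueHeight
  omits_le_one δ hδ hδlim := by
    rcases (le_of_isSuccLimit_of_lt_add_omega0 hδlim hδ).lt_or_eq with hδα | rfl
    · rw [limAt_starExt_of_le hδα.le, level_starExt_of_lt hδα]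
      exact hT.omits_le_one δ hδα hδlim
    · rw [limAt_starExt_of_le le_rfl, level_starExt_self hT.tree, sdiff_self]
      exact subsingleton_empty

end starExt

theorem stmt7_general (α : Ordinal) (T : Set BSeq)
    (hT : IsCond α T) :
    IsCond (α + Ordinal.omega0) (starExt α T) ∧
    QLe α T (α + Ordinal.omega0) (starExt α T) ∧
    level (starExt α T) α = limAt T α ∧
    limAt (levelLT (starExt α T) α) α \ level (starExt α T) α = ∅ := by
  refine ⟨isCond_starExt hT, ⟨le_self_add, (levelLT_starExt_self hT.tree).symm⟩,
    level_starExt_self hT.tree, ?_⟩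
  rw [levelLT_starExt_self hT.tree, level_starExt_self hT.tree, sdiff_self]

theorem stmt7 (α : Ordinal) (T : Set BSeq) (f : BSeq → BSeq)
    (hT : IsCond α T) (hf : IsWitness α T f) :
    IsCond (α + Ordinal.omega0) (starExt α T) ∧
    QLe α T (α + Ordinal.omega0) (starExt α T) ∧
    level (starExt α T) α = limAt T α ∧
    limAt (levelLT (starExt α T) α) α \ level (starExt α T) α = ∅ :=
  stmt7_general α T hT
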